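/- In every normal probe interval model of a connected probe interval graph G, the probe set of every column that is not a clique column is a proper subset of the probe set of the column immediately to its left or of the probe set of the column immediately to its right. -/

import Mathlib

open Set

/-- A set of columns is consecutive in the column order. -/
def ConsecSet {k : ℕ} (A : Set (Fin k)) : Prop :=
  ∀ i j l : Fin k, i ≤ j → j ≤ l → i ∈ A → l ∈ A → j ∈ A

/-- Every row of the 0-1 matrix `M` has a nonempty consecutive block of 1's. -/
def RowsOK {V : Type} {k : ℕ} (M : V → Fin k → Prop) : Prop :=
  ∀ v : V, {j | M v j}.Nonempty ∧ ConsecSet {j | M v j}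

/-- The matrix `M` represents exactly the adjacencies of `G`, where `P` is the probe set:
two distinct vertices are adjacent iff some column has a 1 in both rows and at least
one of the two vertices is a probe. -/
def Represents {V : Type} {k : ℕ} (G : SimpleGraph V) (P : Set V)
    (M : V → Fin k → Prop) : Prop :=
  ∀ u v : V, u ≠ v → (G.Adj u v ↔ (u ∈ P ∨ v ∈ P) ∧ ∃ j, M u j ∧ M v j)

/-- `M` is a probe interval model of `G` with probe set `P`. -/
def IsPIModel {V : Type} {k : ℕ} (G : SimpleGraph V) (P : Set V)
    (M : V → Fin k → Prop) : Prop :=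
  RowsOK M ∧ Represents G P M

/-- The pairs of vertices that the matrix represents as adjacent. -/
def RepAdj {V : Type} {k : ℕ} (P : Set V) (M : V → Fin k → Prop) (u v : V) : Prop :=
  u ≠ v ∧ (u ∈ P ∨ v ∈ P) ∧ ∃ j, M u j ∧ M v j

/-- `c` is the left endpoint of row `v`: the first column where the row has a 1. -/
def IsLeftEnd {V : Type} {k : ℕ} (M : V → Fin k → Prop) (v : V) (c : Fin k) : Prop :=
  M v c ∧ ∀ j, M v j → c ≤ j

/-- `c` is the right endpoint of row `v`: the last column where the row has a 1. -/
def IsRightEnd {V : Type} {k : ℕ} (M : V → Fin k → Prop) (v : V) (c : Fin k) : Prop :=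
  M v c ∧ ∀ j, M v j → j ≤ c

/-- A proper left endpoint: the left endpoint of a row with a 1 in more than one column. -/
def IsProperLeftEnd {V : Type} {k : ℕ} (M : V → Fin k → Prop) (v : V) (c : Fin k) : Prop :=
  IsLeftEnd M v c ∧ ∃ j, M v j ∧ j ≠ c

/-- A proper right endpoint: the right endpoint of a row with a 1 in more than one column. -/
def IsProperRightEnd {V : Type} {k : ℕ} (M : V → Fin k → Prop) (v : V) (c : Fin k) : Prop :=
  IsRightEnd M v c ∧ ∃ j, M v j ∧ j ≠ c

/-- `M'` is obtained from `M` by a contraction of row `v`: the first or last 1 of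
row `v` is changed to a 0, resulting in a shorter (still nonempty) interval. -/
def Contraction {V : Type} {k : ℕ} (M M' : V → Fin k → Prop) (v : V) : Prop :=
  ∃ c : Fin k, (IsProperLeftEnd M v c ∨ IsProperRightEnd M v c) ∧
    ∀ u j, M' u j ↔ M u j ∧ ¬(u = v ∧ j = c)

/-- Row `v` is taut: every contraction of it changes the set of vertex pairs that
the matrix represents as adjacent. -/
def TautRow {V : Type} {k : ℕ} (P : Set V) (M : V → Fin k → Prop) (v : V) : Prop :=
  ∀ M' : V → Fin k → Prop, Contraction M M' v → RepAdj P M' ≠ RepAdj P M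

/-- Every row of the model is taut. -/
def Taut {V : Type} {k : ℕ} (P : Set V) (M : V → Fin k → Prop) : Prop :=
  ∀ v : V, TautRow P M v

/-- The matrix obtained from `M` by merging the consecutive columns `i` and `i + 1`
(replacing them by their entrywise OR). -/
def mergeCols {V : Type} {k : ℕ} (M : V → Fin k → Prop) (i : ℕ) :
    V → Fin (k - 1) → Prop := fun v j =>
  if h1 : j.val < i then M v ⟨j.val, by have := j.isLt; omega⟩
  else if h2 : j.val = i then
    M v ⟨i, by have := j.isLt; omega⟩ ∨ M v ⟨i + 1, by have := j.isLt; omega⟩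
  else M v ⟨j.val + 1, by have := j.isLt; omega⟩

/-- The consecutive columns `i` and `i + 1` of the model `M` of `G` can be merged:
replacing them by their entrywise OR again yields a probe interval model representing
the same adjacencies. -/
def CanMerge {V : Type} {k : ℕ} (G : SimpleGraph V) (P : Set V)
    (M : V → Fin k → Prop) (i : ℕ) : Prop :=
  i + 1 < k ∧ IsPIModel G P (mergeCols M i)

/-- No two consecutive columns of the model can be merged. -/
def MinimalModel {V : Type} {k : ℕ} (G : SimpleGraph V) (P : Set V)
    (M : V → Fin k → Prop) : Prop :=
  ∀ i : ℕ, ¬ CanMerge G P M i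

/-- A normal probe interval model: a probe interval model that is taut and minimal. -/
def IsNormalModel {V : Type} {k : ℕ} (G : SimpleGraph V) (P : Set V)
    (M : V → Fin k → Prop) : Prop :=
  IsPIModel G P M ∧ Taut P M ∧ MinimalModel G P M

/-- The vertex set of a column: the vertices whose rows have a 1 in that column. -/
def colVerts {V : Type} {k : ℕ} (M : V → Fin k → Prop) (j : Fin k) : Set V :=
  {v | M v j}

/-- The probe set of a column. -/
def probeSetCol {V : Type} {k : ℕ} (P : Set V) (M : V → Fin k → Prop)
    (j : Fin k) : Set V :=
  {v | v ∈ P ∧ M v j}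

/-- The probe set of the column with (natural number) index `n`, empty if out of range. -/
def probeSetAt {W : Type} {K : ℕ} (P : Set W) (M : W → Fin K → Prop) (n : ℕ) : Set W :=
  {v | v ∈ P ∧ ∃ hn : n < K, M v ⟨n, hn⟩}

/-- `G` is a probe interval graph with respect to the probe set `P`. -/
def IsPIGraph {V : Type} (G : SimpleGraph V) (P : Set V) : Prop :=
  ∃ (k : ℕ) (M : V → Fin k → Prop), IsPIModel G P M

/-- `x` is a simplicial non-probe: a non-probe whose neighborhood induces a
complete subgraph. -/
def SimpNonProbe {V : Type} (G : SimpleGraph V) (P : Set V) (x : V) : Prop :=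
  x ∉ P ∧ G.IsClique (G.neighborSet x)

/-- The set `N_S` of simplicial non-probes. -/
def setNS {V : Type} (G : SimpleGraph V) (P : Set V) : Set V :=
  {x | SimpNonProbe G P x}

/-- `K` is (the vertex set of) a maximal complete subgraph of `H`. -/
def IsMaxClique {W : Type} (H : SimpleGraph W) (K : Set W) : Prop :=
  H.IsClique K ∧ ∀ K' : Set W, H.IsClique K' → K ⊆ K' → K' = K

/-- `K` is (the vertex set of) a maximal complete subgraph of `G[P]`. -/
def IsMaxPClique {V : Type} (G : SimpleGraph V) (P : Set V) (K : Set V) : Prop :=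
  (K ⊆ P ∧ K.Pairwise G.Adj) ∧
    ∀ K' : Set V, K' ⊆ P → K'.Pairwise G.Adj → K ⊆ K' → K' = K

/-- A clique column: its vertex set contains a clique of `G[P]`. -/
def IsCliqueCol {V : Type} {k : ℕ} (G : SimpleGraph V) (P : Set V)
    (M : V → Fin k → Prop) (j : Fin k) : Prop :=
  ∃ K : Set V, IsMaxPClique G P K ∧ K ⊆ colVerts M j

/-- A left semi-clique column: it contains a proper right endpoint of a probe and a
proper left endpoint of a non-probe, but no left endpoint of a probe and no right
endpoint of a non-probe. -/
def IsLeftSemiCol {V : Type} {k : ℕ} (P : Set V) (M : V → Fin k → Prop)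
    (j : Fin k) : Prop :=
  (∃ p ∈ P, IsProperRightEnd M p j) ∧ (∃ x, x ∉ P ∧ IsProperLeftEnd M x j) ∧
    (∀ p ∈ P, ¬ IsLeftEnd M p j) ∧ (∀ x, x ∉ P → ¬ IsRightEnd M x j)

/-- A right semi-clique column (symmetric to a left semi-clique column). -/
def IsRightSemiCol {V : Type} {k : ℕ} (P : Set V) (M : V → Fin k → Prop)
    (j : Fin k) : Prop :=
  (∃ p ∈ P, IsProperLeftEnd M p j) ∧ (∃ x, x ∉ P ∧ IsProperRightEnd M x j) ∧
    (∀ p ∈ P, ¬ IsRightEnd M p j) ∧ (∀ x, x ∉ P → ¬ IsLeftEnd M x j)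

/-- A semi-clique column: a left or right semi-clique column. -/
def IsSemiCol {V : Type} {k : ℕ} (P : Set V) (M : V → Fin k → Prop)
    (j : Fin k) : Prop :=
  IsLeftSemiCol P M j ∨ IsRightSemiCol P M j

/-- A simplicial column: not a clique column, its vertex set contains a simplicial
non-probe, and it contains no endpoint of a non-simplicial non-probe. -/
def IsSimpCol {V : Type} {k : ℕ} (G : SimpleGraph V) (P : Set V)
    (M : V → Fin k → Prop) (j : Fin k) : Prop :=
  ¬ IsCliqueCol G P M j ∧ (∃ x, SimpNonProbe G P x ∧ M x j) ∧
    ∀ x, x ∉ P → ¬ SimpNonProbe G P x → ¬ IsLeftEnd M x j ∧ ¬ IsRightEnd M x j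

/-- The probe set of the induced subgraph `G - N_S` on `V \ N_S`. -/
def probesPS {V : Type} (G : SimpleGraph V) (P : Set V) : Set ↥((setNS G P)ᶜ) :=
  {v | (v : V) ∈ P}

/-- The graph `G**` on `V \ N_S`: its edges are those of `G - N_S` together with the
pairs `x y` of non-probes such that `N(x) ∩ N(y)` equals a clique of `G[P]` or
contains two nonadjacent vertices. -/
def Gss {V : Type} (G : SimpleGraph V) (P : Set V) : SimpleGraph ↥((setNS G P)ᶜ) :=
  SimpleGraph.fromRel (fun u v =>
    G.Adj (u : V) (v : V) ∨
      ((u : V) ∉ P ∧ (v : V) ∉ P ∧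
        ((∃ K : Set V, IsMaxPClique G P K ∧
            G.neighborSet (u : V) ∩ G.neighborSet (v : V) = K) ∨
          (∃ a b : V, a ∈ G.neighborSet (u : V) ∩ G.neighborSet (v : V) ∧
            b ∈ G.neighborSet (u : V) ∩ G.neighborSet (v : V) ∧
            a ≠ b ∧ ¬ G.Adj a b))))

/-- `M` is a consecutive-ones ordered clique matrix of `H`: it has one column per
maximal clique of `H`, with a 1 in row `v` and column `K` exactly when `v ∈ K`, and
the 1's in every row are consecutive. -/
def IsC1CliqueMatrix {W : Type} (H : SimpleGraph W) {k : ℕ}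
    (M : W → Fin k → Prop) : Prop :=
  (∃ f : Fin k → Set W, Function.Injective f ∧
      (∀ j, IsMaxClique H (f j)) ∧ (∀ K, IsMaxClique H K → ∃ j, f j = K) ∧
      (∀ v j, M v j ↔ v ∈ f j)) ∧
    ∀ v : W, ConsecSet {j | M v j}

/-- A 0-1 matrix (with rows indexed by `R`) has the consecutive-ones property. -/
def HasC1P {R : Type} {n : ℕ} (M : R → Fin n → Prop) : Prop :=
  ∃ σ : Equiv.Perm (Fin n), ∀ r, ConsecSet {j | M r (σ j)}

/-- Two sets properly overlap. -/
def ProperOverlap {α : Type} (A B : Set α) : Prop :=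
  (A ∩ B).Nonempty ∧ (A \ B).Nonempty ∧ (B \ A).Nonempty

/-!
The probes of a column `j` pairwise meet in `j`, so they form a clique of `G[P]`; extend it to
a maximal clique `K`. If `j` is not a clique column, some `p ∈ K` misses `j`, so the interval of
`p` lies on one side of `j`, and every probe of `j`, meeting both `j` and the interval of `p`,
also meets the neighbour `j'` of `j` on that side. The inclusion of probe sets is proper by
minimality: if two adjacent columns had the same probe set, merging them would create no new
adjacency, since two rows meeting only in the merged column each lie in just one of the two
columns, and so neither is a probe.
-/

theorem ConsecSet.mem_of_between {k : ℕ} {A : Set (Fin k)} (hA : ConsecSet A) {a b c : Fin k}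
    (ha : a ∈ A) (hc : c ∈ A) (hb : a ≤ b ∧ b ≤ c ∨ c ≤ b ∧ b ≤ a) : b ∈ A := by
  rcases hb with ⟨hab, hbc⟩ | ⟨hcb, hba⟩
  · exact hA a b c hab hbc ha hc
  · exact hA c b a hcb hba hc ha

theorem ConsecSet.exists_adjacent_between {k : ℕ} {A : Set (Fin k)} (hA : ConsecSet A)
    (hne : A.Nonempty) {j : Fin k} (hj : j ∉ A) :
    ∃ j' : Fin k, (j'.val + 1 = j.val ∨ j.val + 1 = j'.val) ∧
      ∀ c ∈ A, c ≤ j' ∧ j' ≤ j ∨ j ≤ j' ∧ j' ≤ c := by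
  obtain ⟨c₀, hc₀⟩ := hne
  have hc₀j : c₀ ≠ j := fun h => hj (h ▸ hc₀)
  rcases hc₀j.lt_or_gt with hlt | hgt
  · refine ⟨⟨j - 1, by omega⟩, Or.inl (by dsimp only; omega), fun c hc => Or.inl ?_⟩
    have hcj : c < j := lt_of_not_ge fun h => hj (hA c₀ j c hlt.le h hc₀ hc)
    simp only [Fin.le_def, Fin.lt_def] at hcj ⊢
    omega
  · refine ⟨⟨j + 1, by omega⟩, Or.inr rfl, fun c hc => Or.inr ?_⟩
    have hjc : j < c := lt_of_not_ge fun h => hj (hA c j c₀ h hgt.le hc hc₀)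
    simp only [Fin.le_def, Fin.lt_def] at hjc ⊢
    omega

/-- Index of the column of `mergeCols M i` that contains column `c` of `M`. -/
def mergedCol (i c : ℕ) : ℕ :=
  if c ≤ i then c else c - 1

theorem mergedCol_cases (i c : ℕ) :
    (c ≤ i ∧ mergedCol i c = c) ∨ (i < c ∧ mergedCol i c + 1 = c) := by
  unfold mergedCol
  split_ifs <;> omega

theorem mergeCols_iff {V : Type} {k : ℕ} (M : V → Fin k → Prop) (i : ℕ) (v : V)
    (m : Fin (k - 1)) :
    mergeCols M i v m ↔ ∃ c : Fin k, M v c ∧ mergedCol i c = m := by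
  have hm := m.isLt
  unfold mergeCols mergedCol
  split_ifs with h1 h2
  · refine ⟨fun h => ⟨_, h, by dsimp only; split_ifs <;> omega⟩, ?_⟩
    rintro ⟨c, hc, hcm⟩
    convert hc using 2
    split_ifs at hcm <;> omega
  · refine ⟨?_, ?_⟩
    · rintro (h | h)
      · exact ⟨_, h, by dsimp only; split_ifs <;> omega⟩
      · exact ⟨_, h, by dsimp only; split_ifs <;> omega⟩
    · rintro ⟨c, hc, hcm⟩
      split_ifs at hcm with hci
      · left; convert hc using 2; omega
      · right; convert hc using 2; omega
  · refine ⟨fun h => ⟨_, h, by dsimp only; split_ifs <;> omega⟩, ?_⟩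
    rintro ⟨c, hc, hcm⟩
    convert hc using 2
    split_ifs at hcm <;> omega

section Merge

variable {V : Type} {k : ℕ} (M : V → Fin k → Prop) {i : ℕ}

theorem mergeCols_of_mem (hik : i + 1 < k) {v : V} {c : Fin k} (hc : M v c) :
    mergeCols M i v ⟨mergedCol i c, by unfold mergedCol; split_ifs <;> omega⟩ :=
  (mergeCols_iff M i v _).2 ⟨c, hc, rfl⟩

theorem rowsOK_mergeCols (hik : i + 1 < k) (hR : RowsOK M) : RowsOK (mergeCols M i) := by
  intro v
  obtain ⟨⟨c, hc⟩, hconsec⟩ := hR v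
  refine ⟨⟨_, mergeCols_of_mem M hik hc⟩, ?_⟩
  intro a b d hab hbd ha hd
  obtain ⟨a', ha', haa'⟩ := (mergeCols_iff M i v a).1 ha
  obtain ⟨d', hd', hdd'⟩ := (mergeCols_iff M i v d).1 hd
  rw [Fin.le_def] at hab hbd
  have hb := b.isLt
  by_cases hba : (b : ℕ) = mergedCol i a'
  · exact (mergeCols_iff M i v b).2 ⟨a', ha', hba.symm⟩
  by_cases hbd' : (b : ℕ) = mergedCol i d'
  · exact (mergeCols_iff M i v b).2 ⟨d', hd', hbd'.symm⟩
  -- strictly between `a'` and `d'`, the column `b` is the image of a single original column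
  let b' : Fin k := ⟨if (b : ℕ) ≤ i then b else b + 1, by split_ifs <;> omega⟩
  have hb' := mergedCol_cases i b'
  have := mergedCol_cases i a'
  have := mergedCol_cases i d'
  refine (mergeCols_iff M i v b).2 ⟨b', hconsec a' b' d' ?_ ?_ ha' hd', ?_⟩ <;>
    simp only [b', Fin.le_def] at hb' ⊢ <;> split_ifs at hb' ⊢ <;> omega

theorem exists_split_of_not_canMerge {G : SimpleGraph V} {P : Set V} (hM : IsPIModel G P M)
    (hik : i + 1 < k) (hmerge : ¬ CanMerge G P M i) :
    ∃ u v, (u ∈ P ∨ v ∈ P) ∧ M u ⟨i, by omega⟩ ∧ ¬ M u ⟨i + 1, hik⟩ ∧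
      M v ⟨i + 1, hik⟩ ∧ ¬ M v ⟨i, by omega⟩ := by
  by_contra! hsplit
  refine hmerge ⟨hik, rowsOK_mergeCols M hik hM.1, fun u v huv => ?_⟩
  rw [hM.2 u v huv]
  refine and_congr_right fun hprobe => ⟨?_, ?_⟩
  · rintro ⟨c, hu, hv⟩
    exact ⟨_, mergeCols_of_mem M hik hu, mergeCols_of_mem M hik hv⟩
  · rintro ⟨m, hu, hv⟩
    obtain ⟨a, hua, ham⟩ := (mergeCols_iff M i u m).1 hu
    obtain ⟨b, hvb, hbm⟩ := (mergeCols_iff M i v m).1 hv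
    by_cases hab : a = b
    · exact ⟨a, hua, hab ▸ hvb⟩
    -- two distinct columns with the same merged index are `i` and `i + 1`
    have := mergedCol_cases i a
    have := mergedCol_cases i b
    have hab' := Fin.val_ne_of_ne hab
    rcases Nat.lt_or_gt_of_ne hab' with hlt | hlt
    · obtain rfl : a = ⟨i, Nat.lt_of_succ_lt hik⟩ := Fin.ext (show (a : ℕ) = i by omega)
      obtain rfl : b = ⟨i + 1, hik⟩ := Fin.ext (show (b : ℕ) = i + 1 by omega)
      by_cases hu' : M u ⟨i + 1, hik⟩
      · exact ⟨_, hu', hvb⟩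
      by_cases hv' : M v ⟨i, by omega⟩
      · exact ⟨_, hua, hv'⟩
      exact (hv' (hsplit u v hprobe hua hu' hvb)).elim
    · obtain rfl : b = ⟨i, Nat.lt_of_succ_lt hik⟩ := Fin.ext (show (b : ℕ) = i by omega)
      obtain rfl : a = ⟨i + 1, hik⟩ := Fin.ext (show (a : ℕ) = i + 1 by omega)
      by_cases hv' : M v ⟨i + 1, hik⟩
      · exact ⟨_, hua, hv'⟩
      by_cases hu' : M u ⟨i, by omega⟩
      · exact ⟨_, hu', hvb⟩
      exact (hu' (hsplit v u hprobe.symm hvb hv' hua)).elim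

end Merge

theorem probeSetCol_ne_of_minimal {V : Type} {G : SimpleGraph V} {P : Set V} {k : ℕ}
    {M : V → Fin k → Prop} (hM : IsPIModel G P M) (hmin : MinimalModel G P M)
    {a b : Fin k} (hab : a.val + 1 = b.val) : probeSetCol P M a ≠ probeSetCol P M b := by
  have hk : a.val + 1 < k := hab ▸ b.isLt
  obtain rfl : b = ⟨a + 1, hk⟩ := Fin.ext hab.symm
  obtain ⟨u, v, hprobe, hua, hub, hvb, hva⟩ := exists_split_of_not_canMerge M hM hk (hmin a)
  intro heq
  rcases hprobe with hu | hv
  · exact hub (heq.subset ⟨hu, hua⟩).2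
  · exact hva (heq.superset ⟨hv, hvb⟩).2

theorem exists_isMaxPClique_superset {V : Type} (G : SimpleGraph V) {P Q : Set V}
    (hQP : Q ⊆ P) (hQ : Q.Pairwise G.Adj) : ∃ K, Q ⊆ K ∧ IsMaxPClique G P K := by
  obtain ⟨K, hQK, hK⟩ := zorn_subset_nonempty {K | K ⊆ P ∧ K.Pairwise G.Adj}
    (fun c hc hchain _ => ⟨⋃₀ c,
      ⟨sUnion_subset fun K hK => (hc hK).1,
        (pairwise_sUnion hchain.directedOn).2 fun K hK => (hc hK).2⟩,
      fun _ => subset_sUnion_of_mem⟩) Q ⟨hQP, hQ⟩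
  exact ⟨K, hQK, hK.prop, fun K' hK'P hK' hKK' => (hK.eq_of_subset ⟨hK'P, hK'⟩ hKK').symm⟩

theorem pairwise_adj_probeSetCol {V : Type} {G : SimpleGraph V} {P : Set V} {k : ℕ}
    {M : V → Fin k → Prop} (hM : Represents G P M) (j : Fin k) :
    (probeSetCol P M j).Pairwise G.Adj :=
  fun _ hu _ hv huv => (hM _ _ huv).2 ⟨Or.inl hu.1, j, hu.2, hv.2⟩

theorem exists_adjacent_probeSetCol_subset {V : Type} {G : SimpleGraph V} {P : Set V} {k : ℕ}
    {M : V → Fin k → Prop} (hM : IsPIModel G P M) {j : Fin k} (hj : ¬ IsCliqueCol G P M j) :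
    ∃ j' : Fin k, (j'.val + 1 = j.val ∨ j.val + 1 = j'.val) ∧
      probeSetCol P M j ⊆ probeSetCol P M j' := by
  obtain ⟨hrows, hrep⟩ := hM
  obtain ⟨K, hQK, hK⟩ :=
    exists_isMaxPClique_superset G (fun _ hq => hq.1) (pairwise_adj_probeSetCol hrep j)
  obtain ⟨p, hpK, hpj⟩ := not_subset.1 fun h => hj ⟨K, hK, h⟩
  obtain ⟨j', hadj, hbetween⟩ := (hrows p).2.exists_adjacent_between (hrows p).1 hpj
  refine ⟨j', hadj, fun q hq => ⟨hq.1, ?_⟩⟩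
  have hpq : p ≠ q := fun h => hpj (h ▸ hq.2)
  obtain ⟨-, c, hpc, hqc⟩ := (hrep p q hpq).1 (hK.1.2 hpK (hQK hq) hpq)
  exact (hrows q).2.mem_of_between hqc hq.2 (hbetween c hpc)

theorem stmt6_general {V : Type} (G : SimpleGraph V) (P : Set V)
    {k : ℕ} (M : V → Fin k → Prop) (hM : IsNormalModel G P M) :
    ∀ j : Fin k, ¬ IsCliqueCol G P M j →
      ∃ j' : Fin k, (j'.val + 1 = j.val ∨ j.val + 1 = j'.val) ∧
        probeSetCol P M j ⊂ probeSetCol P M j' := by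
  obtain ⟨hPI, -, hmin⟩ := hM
  intro j hj
  obtain ⟨j', hadj, hsub⟩ := exists_adjacent_probeSetCol_subset hPI hj
  refine ⟨j', hadj, hsub.ssubset_of_ne ?_⟩
  rcases hadj with h | h
  · exact (probeSetCol_ne_of_minimal hPI hmin h).symm
  · exact probeSetCol_ne_of_minimal hPI hmin h

/-- In every normal probe interval model of a connected probe interval
graph `G`, the probe set of every non-clique column is a proper subset of the probe
set of the column immediately to its left or of the column immediately to its right. -/
theorem stmt6 {V : Type} (G : SimpleGraph V) (P : Set V)
    (hIndep : ∀ u v : V, u ∉ P → v ∉ P → ¬ G.Adj u v)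
    (hConn : G.Connected)
    {k : ℕ} (M : V → Fin k → Prop) (hM : IsNormalModel G P M) :
    ∀ j : Fin k, ¬ IsCliqueCol G P M j →
      ∃ j' : Fin k, (j'.val + 1 = j.val ∨ j.val + 1 = j'.val) ∧
        probeSetCol P M j ⊂ probeSetCol P M j' :=
  stmt6_general G P M hM
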